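/- Let w ∈ L^∞(ℤ_p^N × ℤ_p^N) with integral operators (Wv)(x) = ∫ w(x,y) v(y) dμ(y) and (W̃h)(y) = ∫ w(x,y) h(x) dμ(x) on L²(ℤ_p^N). Let J₁, J₂ ∈ L²(ℤ_p^N) and suppose v₀, h₀ ∈ L²(ℤ_p^N) satisfy Wv₀ + J₂ = 0 and W̃h₀ + J₁ = 0. Then for every M > 0, every Borel probability measure P on L²(ℤ_p^N) × L²(ℤ_p^N), and B = {f ∈ L²(ℤ_p^N) : ‖f‖₂ ≤ M}, the spin-glass generating integral factorizes as ∫_{B×B} exp(⟨h, Wv⟩ + ⟨v, J₁⟩ + ⟨h, J₂⟩) dP(v,h) = exp(⟨v₀, J₁⟩) · ∫_{B×B} exp(⟨v − v₀, W̃(h − h₀)⟩) dP(v,h), both integrals being finite; i.e., Z^spin(J₁,J₂) = C(v₀,h₀) · exp(⟨v₀, J₁⟩) with C(v₀,h₀) a positive constant independent of the integration variables. -/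

import Mathlib

/-!
Integrating the kernel against `b ⊗ a` over the product measure gives a continuous bilinear form
`B b a = ⟨b, W a⟩ = ⟨a, W̃ b⟩` on `L²`. If `W v₀ = -J₂` and `W̃ h₀ = -J₁`, expanding
`B (h - h₀) (v - v₀)` by bilinearity shows that it differs from the exponent
`B h v + ⟨v, J₁⟩ + ⟨h, J₂⟩` by the constant `⟨v₀, J₁⟩`, so the two integrands are proportional.
Both are finite because the exponent is continuous and bounded above on the product of two balls.
-/

open MeasureTheory ENNReal Real

/-- The space `ℤ_p^N`. -/
abbrev PSpace (p : ℕ) [Fact p.Prime] (N : ℕ) := Fin N → ℤ_[p]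

section CompletingTheSquare

variable {R E F : Type*} [CommRing R] [AddCommGroup E] [Module R E] [AddCommGroup F] [Module R F]

theorem LinearMap.apply_sub_apply_sub_of_apply_eq_neg (B : E →ₗ[R] F →ₗ[R] R)
    (ℓ₁ : F → R) (ℓ₂ : E → R) {h₀ : E} {v₀ : F}
    (hh₀ : ∀ v, B h₀ v = -ℓ₁ v) (hv₀ : ∀ h, B h v₀ = -ℓ₂ h) (h : E) (v : F) :
    B (h - h₀) (v - v₀) = B h v + ℓ₁ v + ℓ₂ h - ℓ₁ v₀ := by
  simp only [map_sub, LinearMap.sub_apply, hh₀, hv₀]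
  ring

end CompletingTheSquare

section SpinEnergy

variable {E F : Type*} [NormedAddCommGroup E] [InnerProductSpace ℝ E]
  [NormedAddCommGroup F] [InnerProductSpace ℝ F]

/-- `E^spin(v, h) = -⟨h, W v⟩ - ⟨v, J₁⟩ - ⟨h, J₂⟩` at `f = (v, h)`, with `B h v` in the role
of `⟨h, W v⟩`. -/
noncomputable def spinEnergy (B : E →L[ℝ] F →L[ℝ] ℝ) (J₁ : F) (J₂ : E) (f : F × E) : ℝ :=
  -(B f.2 f.1 + inner ℝ f.1 J₁ + inner ℝ f.2 J₂)

theorem continuous_spinEnergy (B : E →L[ℝ] F →L[ℝ] ℝ) (J₁ : F) (J₂ : E) :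
    Continuous (spinEnergy B J₁ J₂) :=
  ((B.continuous₂.comp continuous_swap |>.add (continuous_fst.inner continuous_const)).add
    (continuous_snd.inner continuous_const)).neg

theorem neg_spinEnergy_le (B : E →L[ℝ] F →L[ℝ] ℝ) (J₁ : F) (J₂ : E) {M : ℝ} {f : F × E}
    (h₁ : ‖f.1‖ ≤ M) (h₂ : ‖f.2‖ ≤ M) :
    -spinEnergy B J₁ J₂ f ≤ ‖B‖ * M * M + M * ‖J₁‖ + M * ‖J₂‖ := by
  have hM : 0 ≤ M := (norm_nonneg _).trans h₁
  have hB : B f.2 f.1 ≤ ‖B‖ * M * M :=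
    (le_abs_self _).trans <| (B.le_opNorm₂ f.2 f.1).trans (by gcongr)
  have hJ₁ : inner ℝ f.1 J₁ ≤ M * ‖J₁‖ :=
    (real_inner_le_norm _ _).trans (by gcongr)
  have hJ₂ : inner ℝ f.2 J₂ ≤ M * ‖J₂‖ :=
    (real_inner_le_norm _ _).trans (by gcongr)
  rw [spinEnergy, neg_neg]
  linarith

end SpinEnergy

theorem integrableOn_exp_of_le {X : Type*} [MeasurableSpace X] {P : Measure X} [IsFiniteMeasure P]
    {g : X → ℝ} {s : Set X} {C : ℝ} (hg : Measurable g) (hs : MeasurableSet s)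
    (hgC : ∀ x ∈ s, g x ≤ C) : IntegrableOn (fun x => exp (g x)) s P := by
  refine IntegrableOn.of_bound (measure_lt_top P s) hg.exp.aestronglyMeasurable (exp C) ?_
  refine ae_restrict_of_forall_mem hs fun x hx => ?_
  rw [norm_of_nonneg (exp_nonneg _)]
  exact exp_le_exp.2 (hgC x hx)

namespace MeasureTheory.Lp

variable {α : Type*} [MeasurableSpace α] {μ : Measure α} {E : Type*} [NormedAddCommGroup E]

theorem ae_norm_le_norm_top (f : Lp E ∞ μ) : ∀ᵐ x ∂μ, ‖f x‖ ≤ ‖f‖ := by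
  have hf : eLpNormEssSup f μ ≠ ∞ := by simpa [eLpNorm_exponent_top] using Lp.eLpNorm_ne_top f
  filter_upwards [enorm_ae_le_eLpNormEssSup f μ] with x hx
  simpa [Lp.norm_def, eLpNorm_exponent_top] using ENNReal.toReal_mono hf hx

theorem integral_norm_le_norm [IsProbabilityMeasure μ] {p : ℝ≥0∞} (hp : 1 ≤ p) (f : Lp E p μ) :
    ∫ x, ‖f x‖ ∂μ ≤ ‖f‖ := by
  rw [integral_norm_eq_lintegral_enorm (Lp.aestronglyMeasurable f), Lp.norm_def,
    ← eLpNorm_one_eq_lintegral_enorm]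
  exact ENNReal.toReal_mono (Lp.eLpNorm_ne_top f)
    (eLpNorm_le_eLpNorm_of_exponent_le hp (Lp.aestronglyMeasurable f))

end MeasureTheory.Lp

theorem MeasureTheory.L2.integral_mul_eq_inner {α : Type*} [MeasurableSpace α] {μ : Measure α}
    (f g : Lp ℝ 2 μ) : ∫ x, f x * g x ∂μ = inner ℝ f g := by
  rw [L2.inner_def]
  exact integral_congr_ae (Filter.Eventually.of_forall fun x => by simp [mul_comm])

section KernelForm

variable {α β : Type*} [MeasurableSpace α] [MeasurableSpace β] {μ : Measure α} {ν : Measure β}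
  [IsProbabilityMeasure μ] [IsProbabilityMeasure ν] (w : Lp ℝ ∞ (μ.prod ν))

theorem integrable_kernel_mul (b : Lp ℝ 2 μ) (a : Lp ℝ 2 ν) :
    Integrable (fun z : α × β => w z * (b z.1 * a z.2)) (μ.prod ν) :=
  (((Lp.memLp b).integrable one_le_two).mul_prod ((Lp.memLp a).integrable one_le_two)).bdd_mul
    (Lp.aestronglyMeasurable w) (Lp.ae_norm_le_norm_top w)

theorem norm_integral_kernel_mul_le (b : Lp ℝ 2 μ) (a : Lp ℝ 2 ν) :
    ‖∫ z : α × β, w z * (b z.1 * a z.2) ∂(μ.prod ν)‖ ≤ ‖w‖ * ‖b‖ * ‖a‖ := by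
  have hdom : Integrable (fun z : α × β => ‖w‖ * (‖b z.1‖ * ‖a z.2‖)) (μ.prod ν) :=
    (((Lp.memLp b).integrable one_le_two).norm.mul_prod
      ((Lp.memLp a).integrable one_le_two).norm).const_mul _
  calc ‖∫ z : α × β, w z * (b z.1 * a z.2) ∂(μ.prod ν)‖
      ≤ ∫ z : α × β, ‖w‖ * (‖b z.1‖ * ‖a z.2‖) ∂(μ.prod ν) := by
        refine norm_integral_le_of_norm_le hdom ?_
        filter_upwards [Lp.ae_norm_le_norm_top w] with z hz
        rw [norm_mul, norm_mul]
        gcongr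
    _ = ‖w‖ * ((∫ x, ‖b x‖ ∂μ) * ∫ y, ‖a y‖ ∂ν) := by
        rw [integral_const_mul, integral_prod_mul (fun x => ‖b x‖) (fun y => ‖a y‖)]
    _ ≤ ‖w‖ * (‖b‖ * ‖a‖) :=
        mul_le_mul_of_nonneg_left (mul_le_mul (Lp.integral_norm_le_norm one_le_two b)
          (Lp.integral_norm_le_norm one_le_two a) (integral_nonneg fun _ => norm_nonneg _)
          (norm_nonneg b)) (norm_nonneg w)
    _ = ‖w‖ * ‖b‖ * ‖a‖ := (mul_assoc _ _ _).symm

noncomputable def kernelForm : Lp ℝ 2 μ →L[ℝ] Lp ℝ 2 ν →L[ℝ] ℝ :=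
  LinearMap.mkContinuous₂
    (LinearMap.mk₂ ℝ (fun b a => ∫ z : α × β, w z * (b z.1 * a z.2) ∂(μ.prod ν))
      (fun b b' a => by
        rw [← integral_add (integrable_kernel_mul w b a) (integrable_kernel_mul w b' a)]
        refine integral_congr_ae ?_
        filter_upwards [Measure.quasiMeasurePreserving_fst.ae_eq_comp (Lp.coeFn_add b b')]
          with z hz
        simp only [Function.comp_apply, Pi.add_apply] at hz
        rw [hz]; ring)
      (fun c b a => by
        rw [smul_eq_mul, ← integral_const_mul]
        refine integral_congr_ae ?_
        filter_upwards [Measure.quasiMeasurePreserving_fst.ae_eq_comp (Lp.coeFn_smul c b)]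
          with z hz
        simp only [Function.comp_apply, Pi.smul_apply, smul_eq_mul] at hz
        rw [hz]; ring)
      (fun b a a' => by
        rw [← integral_add (integrable_kernel_mul w b a) (integrable_kernel_mul w b a')]
        refine integral_congr_ae ?_
        filter_upwards [Measure.quasiMeasurePreserving_snd.ae_eq_comp (Lp.coeFn_add a a')]
          with z hz
        simp only [Function.comp_apply, Pi.add_apply] at hz
        rw [hz]; ring)
      (fun c b a => by
        rw [smul_eq_mul, ← integral_const_mul]
        refine integral_congr_ae ?_
        filter_upwards [Measure.quasiMeasurePreserving_snd.ae_eq_comp (Lp.coeFn_smul c a)]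
          with z hz
        simp only [Function.comp_apply, Pi.smul_apply, smul_eq_mul] at hz
        rw [hz]; ring))
    ‖w‖ (fun b a => norm_integral_kernel_mul_le w b a)

theorem kernelForm_apply (b : Lp ℝ 2 μ) (a : Lp ℝ 2 ν) :
    kernelForm w b a = ∫ z : α × β, w z * (b z.1 * a z.2) ∂(μ.prod ν) :=
  rfl

theorem kernelForm_apply_eq_integral_integral (b : Lp ℝ 2 μ) (a : Lp ℝ 2 ν) :
    kernelForm w b a = ∫ x, ∫ y, b x * w (x, y) * a y ∂ν ∂μ := by
  rw [kernelForm_apply, integral_prod _ (integrable_kernel_mul w b a)]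
  congr 1 with x
  congr 1 with y
  ring

theorem kernelForm_apply_eq_integral_mul_integral (b : Lp ℝ 2 μ) (a : Lp ℝ 2 ν) :
    kernelForm w b a = ∫ x, b x * ∫ y, w (x, y) * a y ∂ν ∂μ := by
  rw [kernelForm_apply, integral_prod _ (integrable_kernel_mul w b a)]
  congr 1 with x
  rw [← integral_const_mul]
  congr 1 with y
  ring

theorem kernelForm_apply_eq_integral_mul_integral_swap (b : Lp ℝ 2 μ) (a : Lp ℝ 2 ν) :
    kernelForm w b a = ∫ y, a y * ∫ x, w (x, y) * b x ∂μ ∂ν := by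
  rw [kernelForm_apply, integral_prod_symm _ (integrable_kernel_mul w b a)]
  congr 1 with y
  rw [← integral_const_mul]
  congr 1 with x
  ring

theorem kernelForm_sub_apply_sub (b b₀ : Lp ℝ 2 μ) (a a₀ : Lp ℝ 2 ν) :
    kernelForm w (b - b₀) (a - a₀) = ∫ y, (a y - a₀ y) * ∫ x, w (x, y) * (b x - b₀ x) ∂μ ∂ν := by
  rw [kernelForm_apply_eq_integral_mul_integral_swap]
  have hb : ∀ y, ∫ x, w (x, y) * (b - b₀) x ∂μ = ∫ x, w (x, y) * (b x - b₀ x) ∂μ := fun y =>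
    integral_congr_ae <| by filter_upwards [Lp.coeFn_sub b b₀] with x hx; rw [hx, Pi.sub_apply]
  refine integral_congr_ae ?_
  filter_upwards [Lp.coeFn_sub a a₀] with y hy
  rw [hy, Pi.sub_apply, hb]

theorem kernelForm_apply_eq_neg_inner_left {a : Lp ℝ 2 ν} {J : Lp ℝ 2 μ}
    (ha : ∀ᵐ x ∂μ, (∫ y, w (x, y) * a y ∂ν) + J x = 0) (b : Lp ℝ 2 μ) :
    kernelForm w b a = -inner ℝ b J := by
  rw [kernelForm_apply_eq_integral_mul_integral, ← L2.integral_mul_eq_inner, ← integral_neg]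
  refine integral_congr_ae ?_
  filter_upwards [ha] with x hx
  rw [eq_neg_of_add_eq_zero_left hx, mul_neg]

theorem kernelForm_apply_eq_neg_inner_right {b : Lp ℝ 2 μ} {J : Lp ℝ 2 ν}
    (hb : ∀ᵐ y ∂ν, (∫ x, w (x, y) * b x ∂μ) + J y = 0) (a : Lp ℝ 2 ν) :
    kernelForm w b a = -inner ℝ a J := by
  rw [kernelForm_apply_eq_integral_mul_integral_swap, ← L2.integral_mul_eq_inner, ← integral_neg]
  refine integral_congr_ae ?_
  filter_upwards [hb] with y hy
  rw [eq_neg_of_add_eq_zero_left hy, mul_neg]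

end KernelForm

theorem stmt7_general {p : ℕ} [Fact p.Prime] {N : ℕ}
    [MeasurableSpace (PSpace p N)]
    (μ : Measure (PSpace p N)) [IsProbabilityMeasure μ]
    (w : Lp ℝ ⊤ (μ.prod μ)) (J₁ J₂ v₀ h₀ : Lp ℝ 2 μ)
    (hv₀ : ∀ᵐ x ∂μ, (∫ y, w (x, y) * v₀ y ∂μ) + J₂ x = 0)
    (hh₀ : ∀ᵐ y ∂μ, (∫ x, w (x, y) * h₀ x ∂μ) + J₁ y = 0)
    (M : ℝ)
    [MeasurableSpace (Lp ℝ 2 μ × Lp ℝ 2 μ)] [BorelSpace (Lp ℝ 2 μ × Lp ℝ 2 μ)]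
    (P : Measure (Lp ℝ 2 μ × Lp ℝ 2 μ)) [IsProbabilityMeasure P] :
    IntegrableOn (fun f : Lp ℝ 2 μ × Lp ℝ 2 μ =>
        Real.exp ((∫ x, ∫ y, f.2 x * w (x, y) * f.1 y ∂μ ∂μ) +
          (∫ x, f.1 x * J₁ x ∂μ) + ∫ x, f.2 x * J₂ x ∂μ))
      {f : Lp ℝ 2 μ × Lp ℝ 2 μ | ‖f.1‖ ≤ M ∧ ‖f.2‖ ≤ M} P ∧
    IntegrableOn (fun f : Lp ℝ 2 μ × Lp ℝ 2 μ =>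
        Real.exp (∫ y, (f.1 y - v₀ y) * (∫ x, w (x, y) * (f.2 x - h₀ x) ∂μ) ∂μ))
      {f : Lp ℝ 2 μ × Lp ℝ 2 μ | ‖f.1‖ ≤ M ∧ ‖f.2‖ ≤ M} P ∧
    (∫ f in {f : Lp ℝ 2 μ × Lp ℝ 2 μ | ‖f.1‖ ≤ M ∧ ‖f.2‖ ≤ M},
        Real.exp ((∫ x, ∫ y, f.2 x * w (x, y) * f.1 y ∂μ ∂μ) +
          (∫ x, f.1 x * J₁ x ∂μ) + ∫ x, f.2 x * J₂ x ∂μ) ∂P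
      = Real.exp (∫ x, v₀ x * J₁ x ∂μ) *
        ∫ f in {f : Lp ℝ 2 μ × Lp ℝ 2 μ | ‖f.1‖ ≤ M ∧ ‖f.2‖ ≤ M},
          Real.exp (∫ y, (f.1 y - v₀ y) * (∫ x, w (x, y) * (f.2 x - h₀ x) ∂μ) ∂μ) ∂P) := by
  set B := kernelForm w
  have h_energy (f : Lp ℝ 2 μ × Lp ℝ 2 μ) :
      (∫ x, ∫ y, f.2 x * w (x, y) * f.1 y ∂μ ∂μ) + (∫ x, f.1 x * J₁ x ∂μ) +
        ∫ x, f.2 x * J₂ x ∂μ = -spinEnergy B J₁ J₂ f := by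
    rw [spinEnergy, neg_neg, kernelForm_apply_eq_integral_integral, L2.integral_mul_eq_inner,
      L2.integral_mul_eq_inner]
  have h_square (f : Lp ℝ 2 μ × Lp ℝ 2 μ) :
      ∫ y, (f.1 y - v₀ y) * (∫ x, w (x, y) * (f.2 x - h₀ x) ∂μ) ∂μ =
        -spinEnergy B J₁ J₂ f - ∫ x, v₀ x * J₁ x ∂μ := by
    rw [← kernelForm_sub_apply_sub, spinEnergy, neg_neg, L2.integral_mul_eq_inner]
    exact B.toLinearMap₁₂.apply_sub_apply_sub_of_apply_eq_neg (inner ℝ · J₁) (inner ℝ · J₂)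
      (kernelForm_apply_eq_neg_inner_right w hh₀) (kernelForm_apply_eq_neg_inner_left w hv₀) f.2 f.1
  have h_ball : MeasurableSet {f : Lp ℝ 2 μ × Lp ℝ 2 μ | ‖f.1‖ ≤ M ∧ ‖f.2‖ ≤ M} :=
    ((isClosed_le continuous_fst.norm continuous_const).inter
      (isClosed_le continuous_snd.norm continuous_const)).measurableSet
  have h_int : IntegrableOn (fun f => exp (-spinEnergy B J₁ J₂ f))
      {f : Lp ℝ 2 μ × Lp ℝ 2 μ | ‖f.1‖ ≤ M ∧ ‖f.2‖ ≤ M} P :=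
    integrableOn_exp_of_le (continuous_spinEnergy B J₁ J₂).neg.measurable h_ball
      fun f hf => neg_spinEnergy_le B J₁ J₂ hf.1 hf.2
  simp_rw [h_energy, h_square, exp_sub]
  refine ⟨h_int, Integrable.div_const h_int _, ?_⟩
  rw [integral_div]
  field_simp

/-- if `Wv₀ + J₂ = 0` and `W̃h₀ + J₁ = 0` in `L²`, then the spin-glass generating
integral factorizes:
`∫_{B×B} exp(⟨h,Wv⟩+⟨v,J₁⟩+⟨h,J₂⟩) dP = exp(⟨v₀,J₁⟩) · ∫_{B×B} exp(⟨v−v₀, W̃(h−h₀)⟩) dP`,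
both integrals being finite. -/
theorem stmt7 {p : ℕ} [Fact p.Prime] {N : ℕ} (hN : 1 ≤ N)
    [MeasurableSpace (PSpace p N)] [BorelSpace (PSpace p N)]
    (μ : Measure (PSpace p N)) [IsProbabilityMeasure μ] [μ.IsAddLeftInvariant]
    (w : Lp ℝ ⊤ (μ.prod μ)) (J₁ J₂ v₀ h₀ : Lp ℝ 2 μ)
    (hv₀ : ∀ᵐ x ∂μ, (∫ y, w (x, y) * v₀ y ∂μ) + J₂ x = 0)
    (hh₀ : ∀ᵐ y ∂μ, (∫ x, w (x, y) * h₀ x ∂μ) + J₁ y = 0)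
    (M : ℝ) (hM : 0 < M)
    [MeasurableSpace (Lp ℝ 2 μ × Lp ℝ 2 μ)] [BorelSpace (Lp ℝ 2 μ × Lp ℝ 2 μ)]
    (P : Measure (Lp ℝ 2 μ × Lp ℝ 2 μ)) [IsProbabilityMeasure P] :
    IntegrableOn (fun f : Lp ℝ 2 μ × Lp ℝ 2 μ =>
        Real.exp ((∫ x, ∫ y, f.2 x * w (x, y) * f.1 y ∂μ ∂μ) +
          (∫ x, f.1 x * J₁ x ∂μ) + ∫ x, f.2 x * J₂ x ∂μ))
      {f : Lp ℝ 2 μ × Lp ℝ 2 μ | ‖f.1‖ ≤ M ∧ ‖f.2‖ ≤ M} P ∧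
    IntegrableOn (fun f : Lp ℝ 2 μ × Lp ℝ 2 μ =>
        Real.exp (∫ y, (f.1 y - v₀ y) * (∫ x, w (x, y) * (f.2 x - h₀ x) ∂μ) ∂μ))
      {f : Lp ℝ 2 μ × Lp ℝ 2 μ | ‖f.1‖ ≤ M ∧ ‖f.2‖ ≤ M} P ∧
    (∫ f in {f : Lp ℝ 2 μ × Lp ℝ 2 μ | ‖f.1‖ ≤ M ∧ ‖f.2‖ ≤ M},
        Real.exp ((∫ x, ∫ y, f.2 x * w (x, y) * f.1 y ∂μ ∂μ) +
          (∫ x, f.1 x * J₁ x ∂μ) + ∫ x, f.2 x * J₂ x ∂μ) ∂P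
      = Real.exp (∫ x, v₀ x * J₁ x ∂μ) *
        ∫ f in {f : Lp ℝ 2 μ × Lp ℝ 2 μ | ‖f.1‖ ≤ M ∧ ‖f.2‖ ≤ M},
          Real.exp (∫ y, (f.1 y - v₀ y) * (∫ x, w (x, y) * (f.2 x - h₀ x) ∂μ) ∂μ) ∂P) :=
  stmt7_general μ w J₁ J₂ v₀ h₀ hv₀ hh₀ M P
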